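/- Assume 0 < α, let q > 3/2 - 2α, and let u be a trigonometric polynomial (real-valued, mean zero, periodic). Then for every s ≥ 0 and β ≥ 0 with q > 3/2 - 2β, |∫ u² (-Δ)^s u_x dx| ≤ C(β,q,s) ‖u‖_{H^q} ‖u‖_{H^{s+β}}², where (-Δ)^s u_x denotes the function with Fourier coefficients (2π i k)(2π|k|)^{2s} û(k) (up to normalization of constants). -/

import Mathlib

/-- The `H^r` norm of a (finitely supported) Fourier coefficient sequence. -/
noncomputable def hnorm (r : ℝ) (c : ℤ → ℂ) : ℝ :=
  (∑' n : ℤ, |(n : ℝ)| ^ (2 * r) * ‖c n‖ ^ 2) ^ ((1 : ℝ) / 2)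

/-!
Symmetrizing the trilinear sum over the plane `k + a + b = 0` replaces the multiplier
`g(k) = k |k|^(2s)` by `g(k) + g(a) + g(b)`, which is small because `g` is odd: when `|a|` is the
smallest of the three frequencies, `x^p - y^p ≤ p (x - y) x^(p-1)` for `p = 2s + 1` gives
`|g(k) + g(a) + g(b)| ≲ |a| |k|^(2s) ≲ |a|^(1-2β) |b|^(s+β) |k|^(s+β)`. The trilinear sum of these
weights is at most `‖|k|^(1-2β) ĉ‖_ℓ¹ ‖u‖²_{H^(s+β)}` (Young), and Cauchy–Schwarz bounds the `ℓ¹`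
norm by `‖u‖_{H^q}` exactly when `Σ |k|^(2(1-2β-q)) < ∞`, i.e. `q > 3/2 - 2β`.
-/

theorem Real.rpow_sub_rpow_le_mul {p x y : ℝ} (hp : 1 ≤ p) (hy : 0 ≤ y) (hyx : y ≤ x) :
    x ^ p - y ^ p ≤ p * (x - y) * x ^ (p - 1) := by
  rcases (hy.trans hyx).eq_or_lt with rfl | hx
  · rw [le_antisymm hyx hy]; simp
  have bernoulli := one_add_mul_self_le_rpow_one_add (s := y / x - 1)
    (by linarith [div_nonneg hy hx.le]) hp
  rw [add_sub_cancel, Real.div_rpow hy hx.le, le_div_iff₀ (by positivity)] at bernoulli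
  rw [Real.rpow_sub_one hx.ne']
  field_simp at bernoulli ⊢
  nlinarith [Real.rpow_pos_of_pos hx p]

/-- The symbol `k |k|^(2s)` of `(-Δ)^s ∂ₓ`, with the factor `2πi` and the powers of `2π` dropped. -/
noncomputable def fracDerivSymbol (s x : ℝ) : ℝ := x * |x| ^ (2 * s)

theorem fracDerivSymbol_neg (s x : ℝ) : fracDerivSymbol s (-x) = -fracDerivSymbol s x := by
  simp [fracDerivSymbol]

theorem fracDerivSymbol_of_nonneg {s x : ℝ} (hs : 0 ≤ s) (hx : 0 ≤ x) :
    fracDerivSymbol s x = x ^ (2 * s + 1) := by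
  rw [fracDerivSymbol, abs_of_nonneg hx, Real.rpow_add_one' hx (by positivity), mul_comm]

theorem abs_fracDerivSymbol (s x : ℝ) : |fracDerivSymbol s x| = |x| * |x| ^ (2 * s) := by
  rw [fracDerivSymbol, abs_mul, abs_of_nonneg (Real.rpow_nonneg (abs_nonneg x) _)]

theorem abs_fracDerivSymbol_add_add_le {s x y z : ℝ} (hs : 0 ≤ s) (hxyz : x + y + z = 0)
    (hxy : |x| ≤ |y|) (hyz : |y| ≤ |z|) :
    |fracDerivSymbol s x + fracDerivSymbol s y + fracDerivSymbol s z| ≤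
      (2 * s + 2) * (|x| * |z| ^ (2 * s)) := by
  wlog hz : 0 ≤ z generalizing x y z
  · have := this (x := -x) (y := -y) (z := -z) (by linarith) (by simpa) (by simpa) (by linarith)
    rwa [fracDerivSymbol_neg, fracDerivSymbol_neg, fracDerivSymbol_neg, ← neg_add, ← neg_add,
      abs_neg, abs_neg, abs_neg] at this
  rw [abs_of_nonneg hz] at hyz ⊢
  have hy : y ≤ 0 := by linarith [neg_abs_le x]
  rw [abs_of_nonpos hy] at hxy hyz
  have hgyz : fracDerivSymbol s y + fracDerivSymbol s z = z ^ (2 * s + 1) - (-y) ^ (2 * s + 1) := by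
    rw [← neg_neg y, fracDerivSymbol_neg, neg_neg, fracDerivSymbol_of_nonneg hs hz,
      fracDerivSymbol_of_nonneg hs (by linarith)]
    ring
  have hmono : (-y) ^ (2 * s + 1) ≤ z ^ (2 * s + 1) :=
    Real.rpow_le_rpow (by linarith) hyz (by positivity)
  have hdiff := Real.rpow_sub_rpow_le_mul (p := 2 * s + 1) (by linarith) (by linarith) hyz
  rw [add_sub_cancel_right, sub_neg_eq_add] at hdiff
  have hx : |fracDerivSymbol s x| ≤ |x| * z ^ (2 * s) := by
    rw [abs_fracDerivSymbol]
    gcongr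
    linarith
  have hzy : z + y ≤ |x| := by linarith [neg_le_abs x]
  calc |fracDerivSymbol s x + fracDerivSymbol s y + fracDerivSymbol s z|
      ≤ |fracDerivSymbol s x| + |fracDerivSymbol s y + fracDerivSymbol s z| := by
        rw [add_assoc]; exact abs_add_le _ _
    _ ≤ |x| * z ^ (2 * s) + (2 * s + 1) * |x| * z ^ (2 * s) := by
        rw [hgyz, abs_of_nonneg (sub_nonneg.2 hmono)]
        exact add_le_add hx (hdiff.trans (by gcongr))
    _ = (2 * s + 2) * (|x| * z ^ (2 * s)) := by ring

theorem mul_rpow_le_two_rpow_mul {s β X Y Z : ℝ} (hs : 0 ≤ s) (hβ : 0 ≤ β) (hX : 0 ≤ X)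
    (hXZ : X ≤ Z) (hZY : Z ≤ 2 * Y) :
    X * Z ^ (2 * s) ≤ 2 ^ (s + β) * (X ^ (1 - 2 * β) * Y ^ (s + β) * Z ^ (s + β)) := by
  rcases hX.eq_or_lt with rfl | hX
  · have : 0 ≤ Y := by linarith
    simp only [zero_mul]
    positivity
  have hZ : 0 < Z := hX.trans_le hXZ
  calc X * Z ^ (2 * s) = X ^ (1 - 2 * β) * X ^ (2 * β) * Z ^ (2 * s) := by
        rw [← Real.rpow_add hX]; norm_num
    _ ≤ X ^ (1 - 2 * β) * Z ^ (2 * β) * Z ^ (2 * s) := by gcongr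
    _ = X ^ (1 - 2 * β) * Z ^ (s + β) * Z ^ (s + β) := by
        rw [mul_assoc, mul_assoc, ← Real.rpow_add hZ, ← Real.rpow_add hZ]; ring_nf
    _ ≤ X ^ (1 - 2 * β) * (2 * Y) ^ (s + β) * Z ^ (s + β) := by gcongr
    _ = 2 ^ (s + β) * (X ^ (1 - 2 * β) * Y ^ (s + β) * Z ^ (s + β)) := by
        rw [Real.mul_rpow (by norm_num) (by linarith)]; ring

theorem abs_fracDerivSymbol_add_add_le_of_abs_le {s β x y z : ℝ} (hs : 0 ≤ s) (hβ : 0 ≤ β)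
    (hxyz : x + y + z = 0) (hxy : |x| ≤ |y|) (hxz : |x| ≤ |z|) :
    |fracDerivSymbol s x + fracDerivSymbol s y + fracDerivSymbol s z| ≤
      (2 * s + 2) * 2 ^ (s + β) * (|x| ^ (1 - 2 * β) * |y| ^ (s + β) * |z| ^ (s + β)) := by
  wlog hyz : |y| ≤ |z| generalizing y z
  · have := this (y := z) (z := y) (by linarith) hxz hxy (by linarith)
    rwa [add_right_comm, mul_right_comm (|x| ^ (1 - 2 * β))] at this
  have hzy : |z| ≤ 2 * |y| := by
    rw [show z = -(x + y) by linarith, abs_neg]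
    linarith [abs_add_le x y]
  calc _ ≤ (2 * s + 2) * (|x| * |z| ^ (2 * s)) := abs_fracDerivSymbol_add_add_le hs hxyz hxy hyz
    _ ≤ (2 * s + 2) * (2 ^ (s + β) * (|x| ^ (1 - 2 * β) * |y| ^ (s + β) * |z| ^ (s + β))) := by
        have := mul_rpow_le_two_rpow_mul hs hβ (abs_nonneg x) hxz hzy
        gcongr
    _ = _ := by ring

theorem abs_fracDerivSymbol_add_add_le_sum {s β x y z : ℝ} (hs : 0 ≤ s) (hβ : 0 ≤ β)
    (hxyz : x + y + z = 0) :
    |fracDerivSymbol s x + fracDerivSymbol s y + fracDerivSymbol s z| ≤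
      (2 * s + 2) * 2 ^ (s + β) * (|x| ^ (1 - 2 * β) * |y| ^ (s + β) * |z| ^ (s + β) +
        |y| ^ (1 - 2 * β) * |x| ^ (s + β) * |z| ^ (s + β) +
        |z| ^ (1 - 2 * β) * |y| ^ (s + β) * |x| ^ (s + β)) := by
  have hC : 0 ≤ (2 * s + 2) * 2 ^ (s + β) := by positivity
  have hx : 0 ≤ |x| ^ (1 - 2 * β) * |y| ^ (s + β) * |z| ^ (s + β) := by positivity
  have hy : 0 ≤ |y| ^ (1 - 2 * β) * |x| ^ (s + β) * |z| ^ (s + β) := by positivity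
  have hz : 0 ≤ |z| ^ (1 - 2 * β) * |y| ^ (s + β) * |x| ^ (s + β) := by positivity
  have hmin : (|x| ≤ |y| ∧ |x| ≤ |z|) ∨ (|y| ≤ |x| ∧ |y| ≤ |z|) ∨ (|z| ≤ |x| ∧ |z| ≤ |y|) := by
    grind
  rcases hmin with ⟨hxy, hxz⟩ | ⟨hyx, hyz⟩ | ⟨hzx, hzy⟩
  · have := abs_fracDerivSymbol_add_add_le_of_abs_le (β := β) hs hβ hxyz hxy hxz
    exact this.trans (mul_le_mul_of_nonneg_left (by linarith) hC)
  · have := abs_fracDerivSymbol_add_add_le_of_abs_le (β := β) hs hβ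
      (by linarith : y + x + z = 0) hyx hyz
    rw [add_comm (fracDerivSymbol s y)] at this
    exact this.trans (mul_le_mul_of_nonneg_left (by linarith) hC)
  · have := abs_fracDerivSymbol_add_add_le_of_abs_le (β := β) hs hβ
      (by linarith : z + y + x = 0) hzy hzx
    rw [add_comm (fracDerivSymbol s z), add_right_comm, add_comm (fracDerivSymbol s y)] at this
    exact this.trans (mul_le_mul_of_nonneg_left (by linarith) hC)

/-! Sums over the plane `k + a + b = 0` of `ℤ³` are written as sums over `(k, a) : ℤ × ℤ`
with `b = -(k + a)`. -/

section Plane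

variable {M : Type*} [AddCommMonoid M] [TopologicalSpace M]

theorem tsum_plane_swap (F : ℤ → ℤ → ℤ → M) :
    ∑' p : ℤ × ℤ, F p.2 p.1 (-(p.1 + p.2)) = ∑' p : ℤ × ℤ, F p.1 p.2 (-(p.1 + p.2)) := by
  rw [← (Equiv.prodComm ℤ ℤ).tsum_eq]
  simp [add_comm]

def planeRotate : Equiv.Perm (ℤ × ℤ) :=
  Function.Involutive.toPerm (fun p => (-(p.1 + p.2), p.2)) fun p => by simp

theorem tsum_plane_rotate (F : ℤ → ℤ → ℤ → M) :
    ∑' p : ℤ × ℤ, F (-(p.1 + p.2)) p.2 p.1 = ∑' p : ℤ × ℤ, F p.1 p.2 (-(p.1 + p.2)) := by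
  rw [← planeRotate.tsum_eq]
  simp [planeRotate]

theorem tsum_plane_add_add [ContinuousAdd M] [T2Space M] (F : ℤ → ℤ → ℤ → M)
    (hF : Summable fun p : ℤ × ℤ => F p.1 p.2 (-(p.1 + p.2))) :
    ∑' p : ℤ × ℤ, (F p.1 p.2 (-(p.1 + p.2)) + F p.2 p.1 (-(p.1 + p.2)) +
      F (-(p.1 + p.2)) p.2 p.1) = 3 • ∑' p : ℤ × ℤ, F p.1 p.2 (-(p.1 + p.2)) := by
  have hswap : Summable fun p : ℤ × ℤ => F p.2 p.1 (-(p.1 + p.2)) := by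
    rw [← (Equiv.prodComm ℤ ℤ).summable_iff]
    simpa [Function.comp_def, add_comm] using hF
  have hrot : Summable fun p : ℤ × ℤ => F (-(p.1 + p.2)) p.2 p.1 := by
    rw [← planeRotate.summable_iff]
    simpa [Function.comp_def, planeRotate] using hF
  rw [(hF.add hswap).tsum_add hrot, hF.tsum_add hswap, tsum_plane_swap, tsum_plane_rotate]
  abel

theorem finite_support_plane {E F : Type*} [Zero E] [Zero F] {c d : ℤ → E}
    (hc : (Function.support c).Finite) (hd : (Function.support d).Finite) {f : ℤ × ℤ → F}
    (hf : ∀ p, c p.1 = 0 ∨ d p.2 = 0 → f p = 0) : (Function.support f).Finite := by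
  refine (hc.prod hd).subset fun p hp => ?_
  by_contra h
  rw [Set.mem_prod, Function.mem_support, Function.mem_support, not_and_or, not_not,
    not_not] at h
  exact hp (hf p h)

theorem summable_plane {E : Type*} [Zero E] {c d : ℤ → E}
    (hc : (Function.support c).Finite) (hd : (Function.support d).Finite) {f : ℤ × ℤ → M}
    (hf : ∀ p, c p.1 = 0 ∨ d p.2 = 0 → f p = 0) : Summable f :=
  summable_of_hasFiniteSupport (finite_support_plane hc hd hf)

theorem tsum_tsum_eq_tsum_plane [ContinuousAdd M] [T3Space M] {f : ℤ × ℤ → M}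
    (hf : (Function.support f).Finite) : ∑' k, ∑' a, f (k, a) = ∑' p, f p :=
  ((summable_of_hasFiniteSupport hf).tsum_prod' fun k =>
    summable_of_hasFiniteSupport (hf.preimage (Prod.mk_right_injective k).injOn)).symm

theorem tsum_comp_neg_add (f : ℤ → M) (k : ℤ) : ∑' a, f (-(k + a)) = ∑' n, f n := by
  simp_rw [neg_add']
  exact (Equiv.subLeft (-k)).tsum_eq f

end Plane

theorem tsum_mul_neg_add_le (v : ℤ → ℝ) (hv : (Function.support v).Finite) (k : ℤ) :
    ∑' a, v a * v (-(k + a)) ≤ ∑' n, v n ^ 2 := by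
  have hv2 : (Function.support fun n => v n ^ 2).Finite :=
    hv.subset fun n hn => by simpa using hn
  have hv2' : (Function.support fun a => v (-(k + a)) ^ 2).Finite :=
    hv2.preimage (neg_injective.comp (add_right_injective k)).injOn
  have hprod : (Function.support fun a => v a * v (-(k + a))).Finite :=
    hv.subset (Function.support_mul_subset_left _ _)
  have hsum : Summable fun a => v a ^ 2 + v (-(k + a)) ^ 2 :=
    (summable_of_hasFiniteSupport hv2).add (summable_of_hasFiniteSupport hv2')
  calc ∑' a, v a * v (-(k + a)) ≤ ∑' a, (v a ^ 2 + v (-(k + a)) ^ 2) / 2 :=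
        (summable_of_hasFiniteSupport hprod).tsum_le_tsum
          (fun a => by linarith [two_mul_le_add_sq (v a) (v (-(k + a)))]) (hsum.div_const 2)
    _ = ∑' n, v n ^ 2 := by
        rw [tsum_div_const, (summable_of_hasFiniteSupport hv2).tsum_add
          (summable_of_hasFiniteSupport hv2'), tsum_comp_neg_add (fun n => v n ^ 2)]
        ring

theorem tsum_plane_mul_mul_le {u v : ℤ → ℝ} (hu : (Function.support u).Finite)
    (hv : (Function.support v).Finite) (hu0 : ∀ n, 0 ≤ u n) :
    ∑' p : ℤ × ℤ, u p.1 * v p.2 * v (-(p.1 + p.2)) ≤ (∑' n, u n) * ∑' n, v n ^ 2 := by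
  have hfin : (Function.support fun p : ℤ × ℤ => u p.1 * v p.2 * v (-(p.1 + p.2))).Finite :=
    finite_support_plane hu hv fun p hp => by rcases hp with h | h <;> simp [h]
  calc ∑' p : ℤ × ℤ, u p.1 * v p.2 * v (-(p.1 + p.2))
      = ∑' k, u k * ∑' a, v a * v (-(k + a)) := by
        rw [← tsum_tsum_eq_tsum_plane hfin]
        simp_rw [mul_assoc, tsum_mul_left]
    _ ≤ ∑' k, u k * ∑' n, v n ^ 2 :=
        Summable.tsum_le_tsum
          (fun k => mul_le_mul_of_nonneg_left (tsum_mul_neg_add_le v hv k) (hu0 k))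
          (summable_of_hasFiniteSupport (hu.subset (Function.support_mul_subset_left _ _)))
          ((summable_of_hasFiniteSupport hu).mul_right _)
    _ = (∑' n, u n) * ∑' n, v n ^ 2 := tsum_mul_right

noncomputable def hweight (r : ℝ) (c : ℤ → ℂ) (n : ℤ) : ℝ := |(n : ℝ)| ^ r * ‖c n‖

section Weights

variable {r q : ℝ} {c : ℤ → ℂ}

theorem hweight_nonneg (r : ℝ) (c : ℤ → ℂ) (n : ℤ) : 0 ≤ hweight r c n := by
  unfold hweight; positivity

theorem support_hweight_subset (r : ℝ) (c : ℤ → ℂ) :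
    Function.support (hweight r c) ⊆ Function.support c := fun n hn h => hn (by simp [hweight, h])

theorem hweight_sq (r : ℝ) (c : ℤ → ℂ) (n : ℤ) :
    hweight r c n ^ 2 = |(n : ℝ)| ^ (2 * r) * ‖c n‖ ^ 2 := by
  rw [hweight, mul_pow, ← Real.rpow_mul_natCast (abs_nonneg _), Nat.cast_ofNat, mul_comm r]

theorem hnorm_eq_tsum_hweight_sq (r : ℝ) (c : ℤ → ℂ) :
    hnorm r c = (∑' n, hweight r c n ^ 2) ^ ((1 : ℝ) / 2) := by
  simp_rw [hweight_sq, hnorm]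

theorem hnorm_sq (r : ℝ) (c : ℤ → ℂ) : hnorm r c ^ 2 = ∑' n, hweight r c n ^ 2 := by
  rw [hnorm_eq_tsum_hweight_sq, ← Real.rpow_natCast,
    ← Real.rpow_mul (tsum_nonneg fun n => sq_nonneg _)]
  norm_num

theorem hweight_eq_rpow_mul (h0 : c 0 = 0) (r q : ℝ) (n : ℤ) :
    hweight r c n = |(n : ℝ)| ^ (r - q) * hweight q c n := by
  rcases eq_or_ne n 0 with rfl | hn
  · simp [hweight, h0]
  · rw [hweight, hweight, ← mul_assoc, ← Real.rpow_add (by positivity), sub_add_cancel]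

theorem tsum_hweight_le (h0 : c 0 = 0) (hsum : Summable fun n : ℤ => |(n : ℝ)| ^ (2 * (r - q)))
    (hc : Summable fun n => hweight q c n ^ 2) :
    ∑' n, hweight r c n ≤ (∑' n : ℤ, |(n : ℝ)| ^ (2 * (r - q))) ^ ((1 : ℝ) / 2) * hnorm q c := by
  have hpow : ∀ n : ℤ, (|(n : ℝ)| ^ (r - q)) ^ (2 : ℝ) = |(n : ℝ)| ^ (2 * (r - q)) := fun n => by
    rw [← Real.rpow_mul (abs_nonneg _), mul_comm]
  have := Real.inner_le_Lp_mul_Lq_tsum_of_nonneg .two_two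
    (fun n : ℤ => Real.rpow_nonneg (abs_nonneg (n : ℝ)) (r - q)) (hweight_nonneg q c)
    (by simpa only [hpow] using hsum) (by simpa only [Real.rpow_two] using hc)
  simp only [hpow, Real.rpow_two] at this
  simpa only [hweight_eq_rpow_mul h0 r q, hnorm_eq_tsum_hweight_sq] using this

end Weights

section Trilinear

variable {c : ℤ → ℂ}

theorem three_mul_tsum_plane_eq (hc : (Function.support c).Finite) (w : ℤ → ℂ) :
    3 * ∑' p : ℤ × ℤ, w p.1 * (c p.1 * c p.2 * c (-(p.1 + p.2))) =
      ∑' p : ℤ × ℤ, (w p.1 + w p.2 + w (-(p.1 + p.2))) *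
        (c p.1 * c p.2 * c (-(p.1 + p.2))) := by
  have hsum : Summable fun p : ℤ × ℤ => w p.1 * (c p.1 * c p.2 * c (-(p.1 + p.2))) :=
    summable_plane hc hc fun p hp => by rcases hp with h | h <;> simp [h]
  have h3 := tsum_plane_add_add (fun x y z => w x * (c x * c y * c z)) hsum
  rw [nsmul_eq_mul, Nat.cast_ofNat] at h3
  rw [← h3]
  congr with p
  ring

theorem norm_fracDerivSymbol_add_add_mul_le {s β : ℝ} (hs : 0 ≤ s) (hβ : 0 ≤ β) (c : ℤ → ℂ)
    {x y z : ℤ} (hxyz : x + y + z = 0) :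
    ‖((fracDerivSymbol s x : ℂ) + fracDerivSymbol s y + fracDerivSymbol s z) * (c x * c y * c z)‖ ≤
      (2 * s + 2) * 2 ^ (s + β) *
        (hweight (1 - 2 * β) c x * hweight (s + β) c y * hweight (s + β) c z +
          hweight (1 - 2 * β) c y * hweight (s + β) c x * hweight (s + β) c z +
          hweight (1 - 2 * β) c z * hweight (s + β) c y * hweight (s + β) c x) := by
  have hsym := abs_fracDerivSymbol_add_add_le_sum (s := s) (β := β) (x := x) (y := y) (z := z)
    hs hβ (by exact_mod_cast hxyz)
  calc _ = |fracDerivSymbol s x + fracDerivSymbol s y + fracDerivSymbol s z| *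
        (‖c x‖ * ‖c y‖ * ‖c z‖) := by
        rw [norm_mul, ← Complex.ofReal_add, ← Complex.ofReal_add, Complex.norm_real,
          Real.norm_eq_abs, norm_mul, norm_mul]
    _ ≤ (2 * s + 2) * 2 ^ (s + β) *
          (|(x : ℝ)| ^ (1 - 2 * β) * |(y : ℝ)| ^ (s + β) * |(z : ℝ)| ^ (s + β) +
            |(y : ℝ)| ^ (1 - 2 * β) * |(x : ℝ)| ^ (s + β) * |(z : ℝ)| ^ (s + β) +
            |(z : ℝ)| ^ (1 - 2 * β) * |(y : ℝ)| ^ (s + β) * |(x : ℝ)| ^ (s + β)) *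
          (‖c x‖ * ‖c y‖ * ‖c z‖) := by gcongr
    _ = _ := by simp only [hweight]; ring

theorem norm_tsum_plane_fracDerivSymbol_le {s β : ℝ} (hs : 0 ≤ s) (hβ : 0 ≤ β)
    (hc : (Function.support c).Finite) :
    ‖∑' p : ℤ × ℤ, (fracDerivSymbol s p.1 : ℂ) * (c p.1 * c p.2 * c (-(p.1 + p.2)))‖ ≤
      (2 * s + 2) * 2 ^ (s + β) * (∑' n, hweight (1 - 2 * β) c n) * hnorm (s + β) c ^ 2 := by
  set C := (2 * s + 2) * 2 ^ (s + β)
  set F : ℤ → ℤ → ℤ → ℝ := fun x y z =>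
    hweight (1 - 2 * β) c x * hweight (s + β) c y * hweight (s + β) c z
  have hF : Summable fun p : ℤ × ℤ => F p.1 p.2 (-(p.1 + p.2)) :=
    summable_plane hc hc fun p hp => by rcases hp with h | h <;> simp [F, hweight, h]
  have hsym := three_mul_tsum_plane_eq hc fun n => (fracDerivSymbol s n : ℂ)
  suffices 3 * ‖∑' p : ℤ × ℤ, (fracDerivSymbol s p.1 : ℂ) * (c p.1 * c p.2 * c (-(p.1 + p.2)))‖ ≤
      3 * (C * (∑' n, hweight (1 - 2 * β) c n) * hnorm (s + β) c ^ 2) by linarith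
  calc _ = ‖∑' p : ℤ × ℤ, ((fracDerivSymbol s p.1 : ℂ) + fracDerivSymbol s p.2 +
        fracDerivSymbol s (-(p.1 + p.2) : ℤ)) * (c p.1 * c p.2 * c (-(p.1 + p.2)))‖ := by
        rw [← hsym, norm_mul, Complex.norm_ofNat]
    _ ≤ ∑' p : ℤ × ℤ, ‖((fracDerivSymbol s p.1 : ℂ) + fracDerivSymbol s p.2 +
        fracDerivSymbol s (-(p.1 + p.2) : ℤ)) * (c p.1 * c p.2 * c (-(p.1 + p.2)))‖ :=
        norm_tsum_le_tsum_norm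
          (summable_plane hc hc fun p hp => by rcases hp with h | h <;> simp [h])
    _ ≤ ∑' p : ℤ × ℤ, C * (F p.1 p.2 (-(p.1 + p.2)) + F p.2 p.1 (-(p.1 + p.2)) +
        F (-(p.1 + p.2)) p.2 p.1) :=
        Summable.tsum_le_tsum
          (fun p => norm_fracDerivSymbol_add_add_mul_le hs hβ c (by ring))
          (summable_plane hc hc fun p hp => by rcases hp with h | h <;> simp [h])
          (summable_plane hc hc fun p hp => by rcases hp with h | h <;> simp [F, hweight, h])
    _ = 3 * (C * ∑' p : ℤ × ℤ, F p.1 p.2 (-(p.1 + p.2))) := by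
        rw [tsum_mul_left, tsum_plane_add_add F hF, nsmul_eq_mul, Nat.cast_ofNat]
        ring
    _ ≤ 3 * (C * (∑' n, hweight (1 - 2 * β) c n) * hnorm (s + β) c ^ 2) := by
        rw [hnorm_sq, mul_assoc C]
        gcongr
        exact tsum_plane_mul_mul_le (hc.subset (support_hweight_subset _ c))
          (hc.subset (support_hweight_subset _ c)) (hweight_nonneg _ c)

end Trilinear

theorem stmt_16_general (q s β : ℝ)
    (hs : 0 ≤ s) (hβ : 0 ≤ β) (hqβ : 3 / 2 - 2 * β < q) :
    ∃ C > 0, ∀ c : ℤ → ℂ,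
      (Function.support c).Finite → c 0 = 0 →
      (∀ n : ℤ, c (-n) = starRingEnd ℂ (c n)) →
      ‖∑' k : ℤ, ∑' a : ℤ, (k : ℂ) * ((|(k : ℝ)| ^ (2 * s) : ℝ) : ℂ) * c k * c a * c (-(k + a))‖
        ≤ C * hnorm q c * hnorm (s + β) c ^ 2 := by
  set K := ∑' n : ℤ, |(n : ℝ)| ^ (2 * (1 - 2 * β - q))
  have hK : Summable fun n : ℤ => |(n : ℝ)| ^ (2 * (1 - 2 * β - q)) := by
    simpa using Real.summable_abs_int_rpow (b := -(2 * (1 - 2 * β - q))) (by linarith)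
  have hKpos : 0 < K := hK.tsum_pos (fun n => by positivity) 1 (by simp)
  refine ⟨(2 * s + 2) * 2 ^ (s + β) * K ^ ((1 : ℝ) / 2), by positivity, fun c hc h0 _ => ?_⟩
  have hplane : ∑' k : ℤ, ∑' a : ℤ,
      (k : ℂ) * ((|(k : ℝ)| ^ (2 * s) : ℝ) : ℂ) * c k * c a * c (-(k + a)) =
      ∑' p : ℤ × ℤ, (fracDerivSymbol s p.1 : ℂ) * (c p.1 * c p.2 * c (-(p.1 + p.2))) := by
    rw [← tsum_tsum_eq_tsum_plane (finite_support_plane hc hc fun p hp => by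
      rcases hp with h | h <;> simp [h])]
    simp only [fracDerivSymbol]
    push_cast
    ring_nf
  have hweight_le := tsum_hweight_le (r := 1 - 2 * β) h0 hK
    (summable_of_hasFiniteSupport <| hc.subset fun n hn h => hn (by simp [hweight, h]))
  rw [hplane]
  refine (norm_tsum_plane_fracDerivSymbol_le hs hβ hc).trans ?_
  rw [mul_assoc _ (K ^ _)]
  gcongr

/-- Lemma 2.1: for a real-valued mean-zero trigonometric polynomial `u` (represented by
its Fourier coefficients `c`), and `s ≥ 0`, `β ≥ 0` with `q > 3/2 - 2β`,
`|∫ u² (-Δ)^s u_x dx| ≤ C(β,q,s) ‖u‖_{H^q} ‖u‖_{H^{s+β}}²` (up to normalization, the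
left-hand side is the symmetrizable trilinear sum `Σ_{k+a+b=0} k|k|^{2s} û(k)û(a)û(b)`). -/
theorem stmt_16 (α q s β : ℝ) (hα : 0 < α) (hq : 3 / 2 - 2 * α < q)
    (hs : 0 ≤ s) (hβ : 0 ≤ β) (hqβ : 3 / 2 - 2 * β < q) :
    ∃ C > 0, ∀ c : ℤ → ℂ,
      (Function.support c).Finite → c 0 = 0 →
      (∀ n : ℤ, c (-n) = starRingEnd ℂ (c n)) →
      ‖∑' k : ℤ, ∑' a : ℤ, (k : ℂ) * ((|(k : ℝ)| ^ (2 * s) : ℝ) : ℂ) * c k * c a * c (-(k + a))‖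
        ≤ C * hnorm q c * hnorm (s + β) c ^ 2 :=
  stmt_16_general q s β hs hβ hqβ
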